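/- arXiv:0905.3636 — 5 statements merged into one kernel-verified Lean document; each statement's English description precedes it below -/
import Mathlib

section
/- Let a < b be real numbers, W : [a,b] → ℝ continuous, λ ∈ ℝ, C > 0, and v : [a,b] → ℝ twice continuously differentiable with v(a) = v(b) = 0, v''(x) = (W(x) − 2λ)·v(x) for all x ∈ [a,b], ∫_a^b v(x)² dx = 1, and W(x) ≥ −C for all x ∈ [a,b]. Then ∫_a^b v'(x)² dx ≤ 2λ + C + 1 and ∫_a^b v(x)²·(W(x) + C + 1) dx ≤ 2λ + C + 1. -/
open MeasureTheory intervalIntegral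

/-!
Multiplying `v'' = (W - 2λ) v` by `v` and integrating by parts (the boundary terms vanish since
`v(a) = v(b) = 0`) gives the energy identity `∫ v'² + ∫ W v² = 2λ ∫ v² = 2λ`. The first bound
follows from `∫ W v² ≥ -C ∫ v² = -C`, the second from `∫ v'² ≥ 0`.
-/

open Set

section Energy

variable {a b : ℝ} {u u' u'' W : ℝ → ℝ}

theorem integral_mul_deriv_deriv_eq_neg_integral_deriv_sq
    (hu : ∀ x ∈ uIcc a b, HasDerivAt u (u' x) x) (hu' : ∀ x ∈ uIcc a b, HasDerivAt u' (u'' x) x)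
    (hu'' : IntervalIntegrable u'' volume a b) (ha : u a = 0) (hb : u b = 0) :
    ∫ x in a..b, u x * u'' x = -∫ x in a..b, u' x ^ 2 := by
  have hu'_int : IntervalIntegrable u' volume a b :=
    ContinuousOn.intervalIntegrable fun x hx => (hu' x hx).continuousAt.continuousWithinAt
  rw [integral_mul_deriv_eq_deriv_mul hu hu' hu'_int hu'', ha, hb]
  simp only [zero_mul, sub_zero, zero_sub, pow_two]

theorem integral_deriv_sq_add_integral_mul_sq_eq (E : ℝ)
    (hu : ∀ x ∈ uIcc a b, HasDerivAt u (u' x) x) (hu' : ∀ x ∈ uIcc a b, HasDerivAt u' (u'' x) x)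
    (hW : ContinuousOn W (uIcc a b)) (hode : ∀ x ∈ uIcc a b, u'' x = (W x - E) * u x)
    (ha : u a = 0) (hb : u b = 0) :
    (∫ x in a..b, u' x ^ 2) + (∫ x in a..b, W x * u x ^ 2) = E * ∫ x in a..b, u x ^ 2 := by
  have hu_cont : ContinuousOn u (uIcc a b) := fun x hx =>
    (hu x hx).continuousAt.continuousWithinAt
  have hu''_int : IntervalIntegrable u'' volume a b :=
    ((hW.sub continuousOn_const).mul hu_cont).congr (fun x hx => hode x hx) |>.intervalIntegrable
  have hWu_int : IntervalIntegrable (fun x => W x * u x ^ 2) volume a b :=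
    (hW.mul (hu_cont.pow 2)).intervalIntegrable
  have hEu_int : IntervalIntegrable (fun x => E * u x ^ 2) volume a b :=
    (continuousOn_const.mul (hu_cont.pow 2)).intervalIntegrable
  have hparts := integral_mul_deriv_deriv_eq_neg_integral_deriv_sq hu hu' hu''_int ha hb
  have hode_int : ∫ x in a..b, u x * u'' x = ∫ x in a..b, (W x * u x ^ 2 - E * u x ^ 2) :=
    integral_congr fun x hx => by simp only [hode x hx]; ring
  rw [hode_int, intervalIntegral.integral_sub hWu_int hEu_int,
    intervalIntegral.integral_const_mul] at hparts
  linarith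

theorem mul_integral_sq_le_integral_mul_sq (hab : a ≤ b) (c : ℝ) (hW : ContinuousOn W (Icc a b))
    (hu : ContinuousOn u (Icc a b)) (hcW : ∀ x ∈ Icc a b, c ≤ W x) :
    c * ∫ x in a..b, u x ^ 2 ≤ ∫ x in a..b, W x * u x ^ 2 := by
  rw [← uIcc_of_le hab] at hW hu
  rw [← intervalIntegral.integral_const_mul]
  exact integral_mono_on hab (continuousOn_const.mul (hu.pow 2)).intervalIntegrable
    (hW.mul (hu.pow 2)).intervalIntegrable fun x hx =>
      mul_le_mul_of_nonneg_right (hcW x hx) (sq_nonneg _)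

end Energy

theorem stmt_1_general (a b : ℝ) (hab : a < b) (W v v' v'' : ℝ → ℝ) (lam C : ℝ)
    (hW : ContinuousOn W (Set.Icc a b))
    (hv' : ∀ x ∈ Set.Icc a b, HasDerivAt v (v' x) x)
    (hv'' : ∀ x ∈ Set.Icc a b, HasDerivAt v' (v'' x) x)
    (hva : v a = 0) (hvb : v b = 0)
    (hode : ∀ x ∈ Set.Icc a b, v'' x = (W x - 2 * lam) * v x)
    (hnorm : (∫ x in a..b, (v x) ^ 2) = 1)
    (hWlb : ∀ x ∈ Set.Icc a b, -C ≤ W x) :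
    (∫ x in a..b, (v' x) ^ 2) ≤ 2 * lam + C + 1 ∧
    (∫ x in a..b, (v x) ^ 2 * (W x + C + 1)) ≤ 2 * lam + C + 1 := by
  have hIcc : uIcc a b = Icc a b := uIcc_of_le hab.le
  have hv_cont : ContinuousOn v (Icc a b) := fun x hx =>
    (hv' x hx).continuousAt.continuousWithinAt
  have henergy := integral_deriv_sq_add_integral_mul_sq_eq (2 * lam) (hIcc ▸ hv') (hIcc ▸ hv'')
    (hIcc ▸ hW) (hIcc ▸ hode) hva hvb
  have hpot := mul_integral_sq_le_integral_mul_sq hab.le (-C) hW hv_cont hWlb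
  have hkin : 0 ≤ ∫ x in a..b, v' x ^ 2 :=
    integral_nonneg hab.le fun x _ => sq_nonneg _
  have hsplit : ∫ x in a..b, v x ^ 2 * (W x + C + 1)
      = (∫ x in a..b, W x * v x ^ 2) + (C + 1) * ∫ x in a..b, v x ^ 2 := by
    rw [← hIcc] at hW hv_cont
    have hWv_int : IntervalIntegrable (fun x => W x * v x ^ 2) volume a b :=
      (hW.mul (hv_cont.pow 2)).intervalIntegrable
    have hv2_int : IntervalIntegrable (fun x => (C + 1) * v x ^ 2) volume a b :=
      (continuousOn_const.mul (hv_cont.pow 2)).intervalIntegrable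
    rw [← intervalIntegral.integral_const_mul, ← intervalIntegral.integral_add hWv_int hv2_int]
    exact integral_congr fun x _ => by ring
  rw [hnorm] at henergy hpot hsplit
  constructor <;> linarith

theorem stmt_1 (a b : ℝ) (hab : a < b) (W v v' v'' : ℝ → ℝ) (lam C : ℝ)
    (hC : 0 < C)
    (hW : ContinuousOn W (Set.Icc a b))
    (hv' : ∀ x ∈ Set.Icc a b, HasDerivAt v (v' x) x)
    (hv'' : ∀ x ∈ Set.Icc a b, HasDerivAt v' (v'' x) x)
    (hv''cont : ContinuousOn v'' (Set.Icc a b))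
    (hva : v a = 0) (hvb : v b = 0)
    (hode : ∀ x ∈ Set.Icc a b, v'' x = (W x - 2 * lam) * v x)
    (hnorm : (∫ x in a..b, (v x) ^ 2) = 1)
    (hWlb : ∀ x ∈ Set.Icc a b, -C ≤ W x) :
    (∫ x in a..b, (v' x) ^ 2) ≤ 2 * lam + C + 1 ∧
    (∫ x in a..b, (v x) ^ 2 * (W x + C + 1)) ≤ 2 * lam + C + 1 :=
  stmt_1_general a b hab W v v' v'' lam C hW hv' hv'' hva hvb hode hnorm hWlb
end

section
/- Let a < b be real numbers, W : [a,b] → ℝ continuous, λ ∈ ℝ, C > 0, and v : [a,b] → ℝ twice continuously differentiable with v(a) = v(b) = 0, v''(x) = (W(x) − 2λ)·v(x) for all x ∈ [a,b], ∫_a^b v(x)² dx = 1, and W(x) ≥ −C for all x ∈ [a,b]. Then for every x ∈ [a,b], v(x)² ≤ 2(2λ + C + 1) / √( inf_{y ∈ [x,b]} (W(y) + C + 1) ). -/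
/-!
Multiplying the equation by `v` and integrating by parts gives the energy identity
`∫ₐᵇ (v'² + (W + C + 1) v²) = 2λ + C + 1` with a nonnegative integrand. With `m` the infimum of
`W + C + 1` on `[x, b]`, AM–GM gives `-2 v v' ≤ (m v² + v'²) / √m ≤ (v'² + (W + C + 1) v²) / √m`
there, so integrating `-(v²)' = -2 v v'` from `x` to `b` and using `v(b) = 0` yields
`v(x)² ≤ (2λ + C + 1) / √m`, half the claimed bound.
-/

open MeasureTheory intervalIntegral

theorem integral_deriv_sq_add_mul_sq_eq {W v v' v'' : ℝ → ℝ} {a b μ : ℝ} (hab : a ≤ b)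
    (hW : ContinuousOn W (Set.Icc a b))
    (hv' : ∀ x ∈ Set.Icc a b, HasDerivAt v (v' x) x)
    (hv'' : ∀ x ∈ Set.Icc a b, HasDerivAt v' (v'' x) x)
    (hv''c : ContinuousOn v'' (Set.Icc a b)) (hva : v a = 0) (hvb : v b = 0)
    (hode : ∀ x ∈ Set.Icc a b, v'' x = (W x - μ) * v x) :
    ∫ x in a..b, (v' x ^ 2 + W x * v x ^ 2) = μ * ∫ x in a..b, v x ^ 2 := by
  have hI : Set.uIcc a b = Set.Icc a b := Set.uIcc_of_le hab
  have hvc : ContinuousOn v (Set.Icc a b) := HasDerivAt.continuousOn hv'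
  have hv'c : ContinuousOn v' (Set.Icc a b) := HasDerivAt.continuousOn hv''
  have hparts : ∫ x in a..b, (v' x * v' x + v x * v'' x) = 0 := by
    rw [integral_deriv_mul_eq_sub (hI ▸ hv') (hI ▸ hv'')
      (hv'c.intervalIntegrable_of_Icc hab) (hv''c.intervalIntegrable_of_Icc hab), hva, hvb]
    ring
  have hint₁ : ContinuousOn (fun x => v' x ^ 2 + W x * v x ^ 2) (Set.Icc a b) := by fun_prop
  have hint₂ : ContinuousOn (fun x => μ * v x ^ 2) (Set.Icc a b) := by fun_prop
  rw [← sub_eq_zero, ← intervalIntegral.integral_const_mul,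
    ← intervalIntegral.integral_sub (hint₁.intervalIntegrable_of_Icc hab)
      (hint₂.intervalIntegrable_of_Icc hab), ← hparts]
  refine integral_congr fun x hx => ?_
  rw [hI] at hx
  simp only [hode x hx]
  ring

theorem sq_le_integral_div_sqrt_of_eq_zero_right {v v' : ℝ → ℝ} {x b m : ℝ} (hxb : x ≤ b)
    (hm : 0 < m) (hv' : ∀ y ∈ Set.Icc x b, HasDerivAt v (v' y) y)
    (hv'c : ContinuousOn v' (Set.Icc x b)) (hvb : v b = 0) :
    v x ^ 2 ≤ (∫ y in x..b, (m * v y ^ 2 + v' y ^ 2)) / √m := by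
  have hI : Set.uIcc x b = Set.Icc x b := Set.uIcc_of_le hxb
  have hvc : ContinuousOn v (Set.Icc x b) := HasDerivAt.continuousOn hv'
  have hint₁ : ContinuousOn (fun y => -(2 * v y * v' y)) (Set.Icc x b) := by fun_prop
  have hint₂ : ContinuousOn (fun y => m * v y ^ 2 + v' y ^ 2) (Set.Icc x b) := by fun_prop
  have hftc : ∫ y in x..b, -(2 * v y * v' y) = v x ^ 2 := by
    rw [integral_eq_sub_of_hasDerivAt (f := fun y => -v y ^ 2)
      (fun y hy => by simpa using ((hv' y (hI ▸ hy)).fun_pow 2).fun_neg)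
      (hint₁.intervalIntegrable_of_Icc hxb), hvb]
    ring
  rw [← hftc, le_div_iff₀ (Real.sqrt_pos.2 hm), ← intervalIntegral.integral_mul_const]
  refine integral_mono_on hxb ((hint₁.mul continuousOn_const).intervalIntegrable_of_Icc hxb)
    (hint₂.intervalIntegrable_of_Icc hxb) fun y _ => ?_
  -- AM–GM: `(√m v + v')² ≥ 0`
  nlinarith [sq_nonneg (√m * v y + v' y), Real.sq_sqrt hm.le]

theorem sq_le_integral_energy_div_sqrt {V v v' : ℝ → ℝ} {a b x m : ℝ} (hx : x ∈ Set.Icc a b)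
    (hV : ContinuousOn V (Set.Icc a b)) (hV₀ : ∀ y ∈ Set.Icc a b, 0 ≤ V y) (hm : 0 < m)
    (hmV : ∀ y ∈ Set.Icc x b, m ≤ V y) (hv' : ∀ y ∈ Set.Icc a b, HasDerivAt v (v' y) y)
    (hv'c : ContinuousOn v' (Set.Icc a b)) (hvb : v b = 0) :
    v x ^ 2 ≤ (∫ y in a..b, (v' y ^ 2 + V y * v y ^ 2)) / √m := by
  have hsub : Set.Icc x b ⊆ Set.Icc a b := Set.Icc_subset_Icc_left hx.1
  have hvc : ContinuousOn v (Set.Icc a b) := HasDerivAt.continuousOn hv'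
  have henergy : ContinuousOn (fun y => v' y ^ 2 + V y * v y ^ 2) (Set.Icc a b) := by fun_prop
  have hlower : ContinuousOn (fun y => m * v y ^ 2 + v' y ^ 2) (Set.Icc a b) := by fun_prop
  calc v x ^ 2 ≤ (∫ y in x..b, (m * v y ^ 2 + v' y ^ 2)) / √m :=
        sq_le_integral_div_sqrt_of_eq_zero_right hx.2 hm (fun y hy => hv' y (hsub hy))
          (hv'c.mono hsub) hvb
    _ ≤ (∫ y in x..b, (v' y ^ 2 + V y * v y ^ 2)) / √m := by
        gcongr
        refine integral_mono_on hx.2 ((hlower.mono hsub).intervalIntegrable_of_Icc hx.2)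
          ((henergy.mono hsub).intervalIntegrable_of_Icc hx.2) fun y hy => ?_
        nlinarith [hmV y hy, sq_nonneg (v y)]
    _ ≤ (∫ y in a..b, (v' y ^ 2 + V y * v y ^ 2)) / √m := by
        gcongr
        refine integral_mono_interval hx.1 hx.2 le_rfl
          ((ae_restrict_mem measurableSet_Ioc).mono fun y hy => ?_)
          (henergy.intervalIntegrable_of_Icc (hx.1.trans hx.2))
        simp only [Pi.zero_apply]
        nlinarith [hV₀ y (Set.Ioc_subset_Icc_self hy), sq_nonneg (v y), sq_nonneg (v' y)]

theorem stmt_2_general (a b : ℝ) (W v v' v'' : ℝ → ℝ) (lam C : ℝ)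
    (hW : ContinuousOn W (Set.Icc a b))
    (hv' : ∀ x ∈ Set.Icc a b, HasDerivAt v (v' x) x)
    (hv'' : ∀ x ∈ Set.Icc a b, HasDerivAt v' (v'' x) x)
    (hv''cont : ContinuousOn v'' (Set.Icc a b))
    (hva : v a = 0) (hvb : v b = 0)
    (hode : ∀ x ∈ Set.Icc a b, v'' x = (W x - 2 * lam) * v x)
    (hnorm : (∫ x in a..b, (v x) ^ 2) = 1)
    (hWlb : ∀ x ∈ Set.Icc a b, -C ≤ W x) :
    ∀ x ∈ Set.Icc a b,
      (v x) ^ 2 ≤ 2 * (2 * lam + C + 1) /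
        Real.sqrt (sInf ((fun y => W y + C + 1) '' Set.Icc x b)) := by
  intro x hx
  have hab : a ≤ b := hx.1.trans hx.2
  have hW₀ : ∀ y ∈ Set.Icc a b, 0 ≤ W y + C + 1 := fun y hy => by linarith [hWlb y hy]
  have henergy : ∫ y in a..b, (v' y ^ 2 + (W y + C + 1) * v y ^ 2) = 2 * lam + C + 1 := by
    rw [integral_deriv_sq_add_mul_sq_eq (W := fun y => W y + C + 1) (μ := 2 * lam + C + 1) hab
      (by fun_prop) hv' hv'' hv''cont hva hvb fun y hy => by rw [hode y hy]; ring, hnorm, mul_one]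
  have hE : 0 ≤ 2 * lam + C + 1 := henergy ▸ integral_nonneg hab fun y hy => by
    nlinarith [hW₀ y hy, sq_nonneg (v y), sq_nonneg (v' y)]
  have hW₁ : ∀ y ∈ Set.Icc x b, 1 ≤ W y + C + 1 := fun y hy => by
    linarith [hWlb y (Set.Icc_subset_Icc_left hx.1 hy)]
  have hm : 1 ≤ sInf ((fun y => W y + C + 1) '' Set.Icc x b) :=
    le_csInf ((Set.nonempty_Icc.2 hx.2).image _) (Set.forall_mem_image.2 hW₁)
  calc v x ^ 2 ≤ (2 * lam + C + 1) / √(sInf ((fun y => W y + C + 1) '' Set.Icc x b)) :=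
        henergy ▸ sq_le_integral_energy_div_sqrt hx (by fun_prop) hW₀ (by linarith)
          (fun y hy => csInf_le ⟨1, Set.forall_mem_image.2 hW₁⟩ ⟨y, hy, rfl⟩) hv'
          (HasDerivAt.continuousOn hv'') hvb
    _ ≤ 2 * (2 * lam + C + 1) / √(sInf ((fun y => W y + C + 1) '' Set.Icc x b)) := by
        gcongr; linarith

theorem stmt_2 (a b : ℝ) (hab : a < b) (W v v' v'' : ℝ → ℝ) (lam C : ℝ)
    (hC : 0 < C)
    (hW : ContinuousOn W (Set.Icc a b))
    (hv' : ∀ x ∈ Set.Icc a b, HasDerivAt v (v' x) x)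
    (hv'' : ∀ x ∈ Set.Icc a b, HasDerivAt v' (v'' x) x)
    (hv''cont : ContinuousOn v'' (Set.Icc a b))
    (hva : v a = 0) (hvb : v b = 0)
    (hode : ∀ x ∈ Set.Icc a b, v'' x = (W x - 2 * lam) * v x)
    (hnorm : (∫ x in a..b, (v x) ^ 2) = 1)
    (hWlb : ∀ x ∈ Set.Icc a b, -C ≤ W x) :
    ∀ x ∈ Set.Icc a b,
      (v x) ^ 2 ≤ 2 * (2 * lam + C + 1) /
        Real.sqrt (sInf ((fun y => W y + C + 1) '' Set.Icc x b)) :=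
  stmt_2_general a b W v v' v'' lam C hW hv' hv'' hv''cont hva hvb hode hnorm hWlb
end

section
/- Let a < b be real numbers, W : [a,b] → ℝ continuous, λ ∈ ℝ, C > 0, and v : [a,b] → ℝ twice continuously differentiable with v(a) = v(b) = 0, v''(x) = (W(x) − 2λ)·v(x) for all x ∈ [a,b], ∫_a^b v(x)² dx = 1, and W(x) ≥ −C for all x ∈ [a,b]. Then for every M ∈ [a,b], ∫_M^b v(x)² dx ≤ (2λ + C + 1) / inf_{y ∈ [M,b]} (W(y) + C + 1). -/
/-!
Multiplying `v'' = (W - 2λ) v` by `v` and integrating by parts gives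
`∫ₐᵇ (W - 2λ) v² = -∫ₐᵇ v'² ≤ 0`, hence `∫ₐᵇ (W + C + 1) v² ≤ 2λ + C + 1`.
The weight `W + C + 1` is at least `1` on `[a, b]`, so dropping `[a, M]` and bounding the
weight on `[M, b]` below by its infimum gives the claim.
-/

open MeasureTheory intervalIntegral Set

section

variable {a b : ℝ} {v v' v'' : ℝ → ℝ}

theorem integral_mul_second_deriv_nonpos (hab : a ≤ b)
    (hv' : ∀ x ∈ Icc a b, HasDerivAt v (v' x) x) (hv'' : ∀ x ∈ Icc a b, HasDerivAt v' (v'' x) x)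
    (hv''i : IntervalIntegrable v'' volume a b) (hva : v a = 0) (hvb : v b = 0) :
    ∫ x in a..b, v x * v'' x ≤ 0 := by
  rw [← uIcc_of_le hab] at hv' hv''
  have hv'i : IntervalIntegrable v' volume a b :=
    ContinuousOn.intervalIntegrable fun x hx => (hv'' x hx).continuousAt.continuousWithinAt
  have hv'sq : 0 ≤ ∫ x in a..b, v' x * v' x :=
    integral_nonneg hab fun x _ => mul_self_nonneg (v' x)
  rw [integral_mul_deriv_eq_deriv_mul hv' hv'' hv'i hv''i, hva, hvb]
  linarith

theorem integral_add_const_mul_sq_le {W : ℝ → ℝ} {E : ℝ} (hab : a ≤ b)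
    (hW : ContinuousOn W (Icc a b))
    (hv' : ∀ x ∈ Icc a b, HasDerivAt v (v' x) x) (hv'' : ∀ x ∈ Icc a b, HasDerivAt v' (v'' x) x)
    (hva : v a = 0) (hvb : v b = 0) (hode : ∀ x ∈ Icc a b, v'' x = (W x - E) * v x) (c : ℝ) :
    ∫ x in a..b, (W x + c) * v x ^ 2 ≤ (E + c) * ∫ x in a..b, v x ^ 2 := by
  have hv : ContinuousOn v (Icc a b) := fun x hx => (hv' x hx).continuousAt.continuousWithinAt
  have hv''i : IntervalIntegrable v'' volume a b :=
    (((hW.sub continuousOn_const).mul hv).congr hode).intervalIntegrable_of_Icc hab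
  have hnonpos : ∫ x in a..b, (W x - E) * v x ^ 2 ≤ 0 := by
    refine le_of_eq_of_le (integral_congr fun x hx => ?_)
      (integral_mul_second_deriv_nonpos hab hv' hv'' hv''i hva hvb)
    rw [uIcc_of_le hab] at hx
    simp only [hode x hx]
    ring
  have hsplit : ∫ x in a..b, (W x + c) * v x ^ 2
      = (∫ x in a..b, (W x - E) * v x ^ 2) + (E + c) * ∫ x in a..b, v x ^ 2 := by
    rw [← intervalIntegral.integral_const_mul, ← intervalIntegral.integral_add]
    · exact integral_congr fun x _ => by ring
    · exact ((hW.sub continuousOn_const).mul (hv.pow 2)).intervalIntegrable_of_Icc hab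
    · exact ((hv.pow 2).intervalIntegrable_of_Icc hab).const_mul _
  linarith

end

theorem mul_integral_le_integral_mul_of_le_on_tail {a M b m : ℝ} {w f : ℝ → ℝ}
    (haM : a ≤ M) (hMb : M ≤ b) (hw : ContinuousOn w (Icc a b)) (hf : ContinuousOn f (Icc a b))
    (hw0 : ∀ x ∈ Icc a b, 0 ≤ w x) (hf0 : ∀ x ∈ Icc a b, 0 ≤ f x)
    (hm : ∀ x ∈ Icc M b, m ≤ w x) :
    m * ∫ x in M..b, f x ≤ ∫ x in a..b, w x * f x := by
  have hsub : Icc M b ⊆ Icc a b := Icc_subset_Icc_left haM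
  have hwf : ContinuousOn (fun x => w x * f x) (Icc a b) := hw.mul hf
  calc m * ∫ x in M..b, f x = ∫ x in M..b, m * f x :=
        (intervalIntegral.integral_const_mul m _).symm
    _ ≤ ∫ x in M..b, w x * f x :=
      integral_mono_on hMb (((hf.mono hsub).intervalIntegrable_of_Icc hMb).const_mul m)
        ((hwf.mono hsub).intervalIntegrable_of_Icc hMb)
        fun x hx => mul_le_mul_of_nonneg_right (hm x hx) (hf0 x (hsub hx))
    _ ≤ ∫ x in a..b, w x * f x := by
      refine integral_mono_interval haM hMb le_rfl ?_
        (hwf.intervalIntegrable_of_Icc (haM.trans hMb))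
      filter_upwards [ae_restrict_mem measurableSet_Ioc] with x hx
      exact mul_nonneg (hw0 x (Ioc_subset_Icc_self hx)) (hf0 x (Ioc_subset_Icc_self hx))

theorem stmt_3_general (a b : ℝ) (W v v' v'' : ℝ → ℝ) (lam C : ℝ)
    (hW : ContinuousOn W (Set.Icc a b))
    (hv' : ∀ x ∈ Set.Icc a b, HasDerivAt v (v' x) x)
    (hv'' : ∀ x ∈ Set.Icc a b, HasDerivAt v' (v'' x) x)
    (hva : v a = 0) (hvb : v b = 0)
    (hode : ∀ x ∈ Set.Icc a b, v'' x = (W x - 2 * lam) * v x)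
    (hnorm : (∫ x in a..b, (v x) ^ 2) = 1)
    (hWlb : ∀ x ∈ Set.Icc a b, -C ≤ W x) :
    ∀ M ∈ Set.Icc a b,
      (∫ x in M..b, (v x) ^ 2) ≤
        (2 * lam + C + 1) / sInf ((fun y => W y + C + 1) '' Set.Icc M b) := by
  rintro M ⟨haM, hMb⟩
  set w : ℝ → ℝ := fun y => W y + C + 1
  have hw : ∀ x ∈ Icc a b, 1 ≤ w x := fun x hx => by linarith [hWlb x hx]
  have hwM : ∀ x ∈ Icc M b, 1 ≤ w x := fun x hx => hw x (Icc_subset_Icc_left haM hx)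
  have hbdd : BddBelow (w '' Icc M b) := ⟨1, forall_mem_image.2 hwM⟩
  have hm : 1 ≤ sInf (w '' Icc M b) :=
    le_csInf ((nonempty_Icc.2 hMb).image w) (forall_mem_image.2 hwM)
  have hv : ContinuousOn v (Icc a b) := fun x hx => (hv' x hx).continuousAt.continuousWithinAt
  rw [le_div_iff₀ (by linarith), mul_comm]
  calc sInf (w '' Icc M b) * ∫ x in M..b, v x ^ 2 ≤ ∫ x in a..b, w x * v x ^ 2 :=
        mul_integral_le_integral_mul_of_le_on_tail haM hMb
          ((hW.add continuousOn_const).add continuousOn_const) (hv.pow 2)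
          (fun x hx => zero_le_one.trans (hw x hx)) (fun x _ => sq_nonneg (v x))
          fun x hx => csInf_le hbdd (mem_image_of_mem w hx)
    _ = ∫ x in a..b, (W x + (C + 1)) * v x ^ 2 := by simp only [w, add_assoc]
    _ ≤ (2 * lam + (C + 1)) * ∫ x in a..b, v x ^ 2 :=
        integral_add_const_mul_sq_le (haM.trans hMb) hW hv' hv'' hva hvb hode (C + 1)
    _ = 2 * lam + C + 1 := by rw [hnorm]; ring

theorem stmt_3 (a b : ℝ) (hab : a < b) (W v v' v'' : ℝ → ℝ) (lam C : ℝ)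
    (hC : 0 < C)
    (hW : ContinuousOn W (Set.Icc a b))
    (hv' : ∀ x ∈ Set.Icc a b, HasDerivAt v (v' x) x)
    (hv'' : ∀ x ∈ Set.Icc a b, HasDerivAt v' (v'' x) x)
    (hv''cont : ContinuousOn v'' (Set.Icc a b))
    (hva : v a = 0) (hvb : v b = 0)
    (hode : ∀ x ∈ Set.Icc a b, v'' x = (W x - 2 * lam) * v x)
    (hnorm : (∫ x in a..b, (v x) ^ 2) = 1)
    (hWlb : ∀ x ∈ Set.Icc a b, -C ≤ W x) :
    ∀ M ∈ Set.Icc a b,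
      (∫ x in M..b, (v x) ^ 2) ≤
        (2 * lam + C + 1) / sInf ((fun y => W y + C + 1) '' Set.Icc M b) :=
  stmt_3_general a b W v v' v'' lam C hW hv' hv'' hva hvb hode hnorm hWlb
end

section
/- Assume hypothesis (H1) and the family setup below, and for each ε ∈ (0,1/2) set v_ε(x) := η_ε(x)·e^{−Q(x)} for x ∈ [ε,1/ε]. Then: (i) there exists A > 0 such that v_ε(x)² ≤ A for all ε ∈ (0,1/2) and all x ∈ [ε,1/ε]; and (ii) for every δ > 0 there exist 0 < m < M < ∞ such that for all ε ∈ (0,1/2), ∫_{[ε,1/ε] ∖ [m,M]} v_ε(x)² dx ≤ δ (the family of measures (v_ε(x)² dx) is tight). -/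
open MeasureTheory intervalIntegral Filter

/-!
The ground-state transform `v = η e^{-Q}` turns `½ η'' - q η' = -λ η` into `v'' = (W - 2λ) v`, so
`v` is a Dirichlet eigenfunction of `-d²/dx² + W` on `[ε, 1/ε]` with `∫ v² = 1`. Integrating
`v v''` by parts gives `∫ W v² + ∫ v'² = 2λ ≤ 2Λ`; as `W ≥ -C`, this bounds `∫ v'²` by `2Λ + C`,
hence `v(x)² = ∫_ε^x 2 v v' ≤ ∫ v² + ∫ v'² ≤ 1 + 2Λ + C`. The same identity bounds the mass of
`v²` on `{W ≥ K}` by `(2Λ + C) / K`; since `W → ∞` this controls the mass near `∞`, while the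
uniform bound controls the mass near `0`.
-/

open Set Real

structure IsDirichletEigenfunction (W : ℝ → ℝ) (μ a b : ℝ) (v v' : ℝ → ℝ) : Prop where
  hasDerivAt : ∀ x ∈ Icc a b, HasDerivAt v (v' x) x
  hasDerivAt_deriv : ∀ x ∈ Icc a b, HasDerivAt v' ((W x - μ) * v x) x
  continuousOn_potential : ContinuousOn W (Icc a b)
  left_eq_zero : v a = 0
  right_eq_zero : v b = 0

namespace IsDirichletEigenfunction

variable {W v v' : ℝ → ℝ} {μ a b C : ℝ}

theorem continuousOn (h : IsDirichletEigenfunction W μ a b v v') : ContinuousOn v (Icc a b) :=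
  fun x hx ↦ (h.hasDerivAt x hx).continuousAt.continuousWithinAt

theorem continuousOn_deriv (h : IsDirichletEigenfunction W μ a b v v') :
    ContinuousOn v' (Icc a b) :=
  fun x hx ↦ (h.hasDerivAt_deriv x hx).continuousAt.continuousWithinAt

theorem integral_mul_sq_add_integral_deriv_sq (h : IsDirichletEigenfunction W μ a b v v')
    (hab : a ≤ b) :
    (∫ x in a..b, W x * v x ^ 2) + ∫ x in a..b, v' x ^ 2 = μ * ∫ x in a..b, v x ^ 2 := by
  have hv := h.continuousOn
  have hv' := h.continuousOn_deriv
  have hW := h.continuousOn_potential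
  rw [← uIcc_of_le hab] at hv hv' hW
  have hparts := integral_mul_deriv_eq_deriv_mul
    (fun x hx ↦ h.hasDerivAt x (uIcc_of_le hab ▸ hx))
    (fun x hx ↦ h.hasDerivAt_deriv x (uIcc_of_le hab ▸ hx))
    hv'.intervalIntegrable ((hW.sub continuousOn_const).mul hv).intervalIntegrable
  have hmul : ∫ x in a..b, v x * ((W x - μ) * v x)
      = (∫ x in a..b, W x * v x ^ 2) - μ * ∫ x in a..b, v x ^ 2 := by
    have hWv : IntervalIntegrable (fun x ↦ W x * v x ^ 2) volume a b :=
      (hW.mul (hv.pow 2)).intervalIntegrable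
    have hμv : IntervalIntegrable (fun x ↦ μ * v x ^ 2) volume a b :=
      (continuousOn_const.mul (hv.pow 2)).intervalIntegrable
    rw [← intervalIntegral.integral_const_mul, ← intervalIntegral.integral_sub hWv hμv]
    exact integral_congr fun x _ ↦ by ring
  simp only [h.left_eq_zero, h.right_eq_zero, hmul, ← sq] at hparts
  linarith

theorem integral_deriv_sq_le (h : IsDirichletEigenfunction W μ a b v v') (hab : a ≤ b)
    (hnorm : ∫ x in a..b, v x ^ 2 = 1) (hWC : ∀ x ∈ Icc a b, -C ≤ W x) :
    ∫ x in a..b, v' x ^ 2 ≤ μ + C := by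
  have hv := h.continuousOn
  have hlow : ∫ x in a..b, -C * v x ^ 2 ≤ ∫ x in a..b, W x * v x ^ 2 :=
    integral_mono_on hab ((continuousOn_const.mul (hv.pow 2)).intervalIntegrable_of_Icc hab)
      ((h.continuousOn_potential.mul (hv.pow 2)).intervalIntegrable_of_Icc hab)
      fun x hx ↦ mul_le_mul_of_nonneg_right (hWC x hx) (sq_nonneg _)
  rw [intervalIntegral.integral_const_mul, hnorm] at hlow
  have := h.integral_mul_sq_add_integral_deriv_sq hab
  rw [hnorm] at this
  linarith

theorem sq_le (h : IsDirichletEigenfunction W μ a b v v') (hnorm : ∫ x in a..b, v x ^ 2 = 1)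
    (hWC : ∀ x ∈ Icc a b, -C ≤ W x) {x : ℝ} (hx : x ∈ Icc a b) : v x ^ 2 ≤ 1 + μ + C := by
  have hab : a ≤ b := hx.1.trans hx.2
  have hv := h.continuousOn
  have hv' := h.continuousOn_deriv
  have hsub : uIcc a x ⊆ Icc a b := uIcc_of_le hx.1 ▸ Icc_subset_Icc_right hx.2
  have hv2 : IntervalIntegrable (fun t ↦ v t ^ 2) volume a b :=
    (hv.pow 2).intervalIntegrable_of_Icc hab
  have hv'2 : IntervalIntegrable (fun t ↦ v' t ^ 2) volume a b :=
    (hv'.pow 2).intervalIntegrable_of_Icc hab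
  have hvv' : IntervalIntegrable (fun t ↦ 2 * v t * v' t) volume a x :=
    ((continuousOn_const.mul (hv.mono hsub)).mul (hv'.mono hsub)).intervalIntegrable
  have hftc : ∫ t in a..x, 2 * v t * v' t = v x ^ 2 := by
    have hderiv : ∀ t ∈ uIcc a x, HasDerivAt (fun t ↦ v t ^ 2) (2 * v t * v' t) t := fun t ht ↦ by
      simpa using (h.hasDerivAt t (hsub ht)).fun_pow 2
    rw [integral_eq_sub_of_hasDerivAt hderiv hvv', h.left_eq_zero]
    simp
  have hmono : ∀ f : ℝ → ℝ, (∀ t, 0 ≤ f t) → IntervalIntegrable f volume a b →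
      ∫ t in a..x, f t ≤ ∫ t in a..b, f t := fun f hf hfi ↦
    integral_mono_interval le_rfl hx.1 hx.2 (ae_of_all _ hf) hfi
  calc v x ^ 2 = ∫ t in a..x, 2 * v t * v' t := hftc.symm
    _ ≤ ∫ t in a..x, (v t ^ 2 + v' t ^ 2) :=
      integral_mono_on hx.1 hvv' (((hv.pow 2).add (hv'.pow 2)).mono hsub).intervalIntegrable
        fun t _ ↦ two_mul_le_add_sq (v t) (v' t)
    _ = (∫ t in a..x, v t ^ 2) + ∫ t in a..x, v' t ^ 2 :=
      integral_add ((hv.pow 2).mono hsub).intervalIntegrable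
        ((hv'.pow 2).mono hsub).intervalIntegrable
    _ ≤ (∫ t in a..b, v t ^ 2) + ∫ t in a..b, v' t ^ 2 :=
      add_le_add (hmono _ (fun t ↦ sq_nonneg _) hv2) (hmono _ (fun t ↦ sq_nonneg _) hv'2)
    _ ≤ 1 + μ + C := by
      rw [hnorm, add_assoc]
      exact add_le_add_right (h.integral_deriv_sq_le hab hnorm hWC) 1

theorem setIntegral_sq_le_div (h : IsDirichletEigenfunction W μ a b v v') (hab : a ≤ b)
    (hnorm : ∫ x in a..b, v x ^ 2 = 1) (hWC : ∀ x ∈ Icc a b, -C ≤ W x) (hC : 0 ≤ C)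
    {S : Set ℝ} (hS : MeasurableSet S) (hSI : S ⊆ Icc a b) {K : ℝ} (hK : 0 < K)
    (hKW : ∀ x ∈ S, K ≤ W x) :
    ∫ x in S, v x ^ 2 ≤ (μ + C) / K := by
  have hv2 : IntegrableOn (fun x ↦ v x ^ 2) (Icc a b) := (h.continuousOn.pow 2).integrableOn_Icc
  have hWv2 : IntegrableOn (fun x ↦ W x * v x ^ 2) (Icc a b) :=
    (h.continuousOn_potential.mul (h.continuousOn.pow 2)).integrableOn_Icc
  have hIcc (f : ℝ → ℝ) : ∫ x in Icc a b, f x = ∫ x in a..b, f x := by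
    rw [integral_of_le hab, integral_Icc_eq_integral_Ioc]
  have htotal : ∫ x in Icc a b, W x * v x ^ 2 ≤ μ := by
    have henergy := h.integral_mul_sq_add_integral_deriv_sq hab
    have hv'2 : 0 ≤ ∫ x in a..b, v' x ^ 2 := integral_nonneg hab fun x _ ↦ sq_nonneg (v' x)
    rw [hnorm] at henergy
    rw [hIcc]
    linarith
  have hrest_le_one : ∫ x in Icc a b \ S, v x ^ 2 ≤ 1 :=
    (setIntegral_mono_set hv2 (ae_of_all _ fun x ↦ sq_nonneg (v x)) sdiff_subset.eventuallyLE).trans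
      (hIcc _ ▸ hnorm.le)
  have hrest : -C ≤ ∫ x in Icc a b \ S, W x * v x ^ 2 :=
    calc -C ≤ -C * ∫ x in Icc a b \ S, v x ^ 2 := by nlinarith
      _ = ∫ x in Icc a b \ S, -C * v x ^ 2 := (MeasureTheory.integral_const_mul _ _).symm
      _ ≤ ∫ x in Icc a b \ S, W x * v x ^ 2 :=
        setIntegral_mono_on ((hv2.mono_set sdiff_subset).const_mul _) (hWv2.mono_set sdiff_subset)
          (measurableSet_Icc.diff hS)
          fun x hx ↦ mul_le_mul_of_nonneg_right (hWC x hx.1) (sq_nonneg _)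
  have hS_W : ∫ x in S, K * v x ^ 2 ≤ ∫ x in S, W x * v x ^ 2 :=
    setIntegral_mono_on ((hv2.mono_set hSI).const_mul _) (hWv2.mono_set hSI) hS
      fun x hx ↦ mul_le_mul_of_nonneg_right (hKW x hx) (sq_nonneg _)
  rw [setIntegral_sdiff hS hWv2 hSI] at hrest
  rw [MeasureTheory.integral_const_mul] at hS_W
  rw [le_div_iff₀ hK]
  linarith

theorem setIntegral_Icc_diff_Icc_sq_le (h : IsDirichletEigenfunction W μ a b v v') (hab : a ≤ b)
    (hnorm : ∫ x in a..b, v x ^ 2 = 1) (hWC : ∀ x ∈ Icc a b, -C ≤ W x) (hC : 0 ≤ C)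
    (ha : 0 ≤ a) {m M K : ℝ} (hm : 0 ≤ m) (hmM : m ≤ M) (hK : 0 < K)
    (hKW : ∀ x ∈ Icc a b, M < x → K ≤ W x) :
    ∫ x in Icc a b \ Icc m M, v x ^ 2 ≤ (1 + μ + C) * m + (μ + C) / K := by
  have hv2 : IntegrableOn (fun x ↦ v x ^ 2) (Icc a b) := (h.continuousOn.pow 2).integrableOn_Icc
  have hsplit : Icc a b \ Icc m M = Icc a b ∩ Iio m ∪ Icc a b ∩ Ioi M := by
    ext x
    simp only [Set.mem_sdiff, mem_union, mem_inter_iff, mem_Icc, mem_Iio, mem_Ioi]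
    grind
  have hdisj : Disjoint (Icc a b ∩ Iio m) (Icc a b ∩ Ioi M) :=
    disjoint_left.2 fun x hx hx' ↦ lt_irrefl x ((hx.2.trans_le hmM).trans hx'.2)
  rw [hsplit, setIntegral_union hdisj (measurableSet_Icc.inter measurableSet_Ioi)
    (hv2.mono_set inter_subset_left) (hv2.mono_set inter_subset_left)]
  refine add_le_add ?_ (h.setIntegral_sq_le_div hab hnorm hWC hC
    (measurableSet_Icc.inter measurableSet_Ioi) inter_subset_left hK fun x hx ↦ hKW x hx.1 hx.2)
  have hA : 0 ≤ 1 + μ + C := (sq_nonneg _).trans (h.sq_le hnorm hWC (left_mem_Icc.2 hab))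
  have hvol : volume.real (Icc a b ∩ Iio m) ≤ m :=
    (measureReal_mono (s₂ := Ico a m) (fun x hx ↦ ⟨hx.1.1, hx.2⟩) measure_Ico_lt_top.ne).trans
      (by rw [Real.volume_real_Ico]; exact max_le (by linarith) hm)
  calc ∫ x in Icc a b ∩ Iio m, v x ^ 2 ≤ ∫ _ in Icc a b ∩ Iio m, (1 + μ + C) :=
        setIntegral_mono_on (hv2.mono_set inter_subset_left)
          (continuousOn_const.integrableOn_Icc.mono_set inter_subset_left)
          (measurableSet_Icc.inter measurableSet_Iio) fun x hx ↦ h.sq_le hnorm hWC hx.1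
    _ = volume.real (Icc a b ∩ Iio m) * (1 + μ + C) := by rw [setIntegral_const, smul_eq_mul]
    _ ≤ (1 + μ + C) * m := by nlinarith

end IsDirichletEigenfunction

theorem hasDerivAt_integral_of_continuousOn {f : ℝ → ℝ} {s : Set ℝ} {c x : ℝ}
    (hf : ContinuousOn f s) (hs : IsOpen s) (hcx : uIcc c x ⊆ s) :
    HasDerivAt (fun u ↦ ∫ y in c..u, f y) (f x) x :=
  integral_hasDerivAt_right (hf.mono hcx).intervalIntegrable
    (hf.stronglyMeasurableAtFilter hs x (hcx right_mem_uIcc))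
    (hf.continuousAt (hs.mem_nhds (hcx right_mem_uIcc)))

theorem mul_exp_neg_sq (y z : ℝ) : (y * exp (-z)) ^ 2 = y ^ 2 * exp (-2 * z) := by
  rw [mul_pow, ← exp_nat_mul]
  ring_nf

theorem isDirichletEigenfunction_mul_exp_neg {q q' Q W η η' η'' : ℝ → ℝ} {lam a b : ℝ}
    (hq : ∀ x ∈ Icc a b, HasDerivAt q (q' x) x) (hq' : ContinuousOn q' (Icc a b))
    (hQ : ∀ x ∈ Icc a b, HasDerivAt Q (q x) x) (hW : ∀ x ∈ Icc a b, W x = q x ^ 2 - q' x)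
    (hη : ∀ x ∈ Icc a b, HasDerivAt η (η' x) x) (hη' : ∀ x ∈ Icc a b, HasDerivAt η' (η'' x) x)
    (hode : ∀ x ∈ Icc a b, (1/2) * η'' x - q x * η' x = -lam * η x)
    (hηa : η a = 0) (hηb : η b = 0) :
    IsDirichletEigenfunction W (2 * lam) a b (fun x ↦ η x * exp (-Q x))
      (fun x ↦ (η' x - q x * η x) * exp (-Q x)) where
  hasDerivAt x hx := by
    refine ((hη x hx).fun_mul (hQ x hx).fun_neg.exp).congr_deriv ?_
    ring
  hasDerivAt_deriv x hx := by
    refine (((hη' x hx).fun_sub ((hq x hx).fun_mul (hη x hx))).fun_mul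
      (hQ x hx).fun_neg.exp).congr_deriv ?_
    rw [hW x hx]
    linear_combination 2 * exp (-Q x) * hode x hx
  continuousOn_potential := by
    refine ContinuousOn.congr ?_ hW
    exact ((HasDerivAt.continuousOn hq).pow 2).sub hq'
  left_eq_zero := by simp [hηa]
  right_eq_zero := by simp [hηb]

theorem stmt_4_general (q q' Q W : ℝ → ℝ)
    (hq : ∀ x ∈ Set.Ioi (0:ℝ), HasDerivAt q (q' x) x)
    (hq'cont : ContinuousOn q' (Set.Ioi 0))
    (hQ : ∀ x, Q x = ∫ y in (1:ℝ)..x, q y)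
    (hWdef : ∀ x ∈ Set.Ioi (0:ℝ), W x = q x ^ 2 - q' x)
    -- Hypothesis (H1)
    (C : ℝ) (hC : 0 < C) (hWlb : ∀ x ∈ Set.Ioi (0:ℝ), -C ≤ W x)
    (hWtop : Tendsto W atTop atTop)
    -- Family setup
    (Λ : ℝ) (lam : ℝ → ℝ) (η η' η'' : ℝ → ℝ → ℝ)
    (hlam : ∀ ε ∈ Set.Ioo (0:ℝ) (1/2), lam ε ≤ Λ)
    (hη' : ∀ ε ∈ Set.Ioo (0:ℝ) (1/2), ∀ x ∈ Set.Icc ε (1/ε),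
      HasDerivAt (η ε) (η' ε x) x)
    (hη'' : ∀ ε ∈ Set.Ioo (0:ℝ) (1/2), ∀ x ∈ Set.Icc ε (1/ε),
      HasDerivAt (η' ε) (η'' ε x) x)
    (hbd : ∀ ε ∈ Set.Ioo (0:ℝ) (1/2), η ε ε = 0 ∧ η ε (1/ε) = 0)
    (hode : ∀ ε ∈ Set.Ioo (0:ℝ) (1/2), ∀ x ∈ Set.Icc ε (1/ε),
      (1/2) * η'' ε x - q x * η' ε x = -(lam ε) * η ε x)
    (hnorm : ∀ ε ∈ Set.Ioo (0:ℝ) (1/2),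
      (∫ x in ε..(1/ε), (η ε x) ^ 2 * Real.exp (-2 * Q x)) = 1) :
    -- (i) uniform boundedness of v_ε² with v_ε(x) = η_ε(x)·e^{−Q(x)}
    (∃ A > 0, ∀ ε ∈ Set.Ioo (0:ℝ) (1/2), ∀ x ∈ Set.Icc ε (1/ε),
      (η ε x * Real.exp (-(Q x))) ^ 2 ≤ A) ∧
    -- (ii) tightness of the family (v_ε(x)² dx)
    (∀ δ > 0, ∃ m M : ℝ, 0 < m ∧ m < M ∧ ∀ ε ∈ Set.Ioo (0:ℝ) (1/2),
      (∫ x in Set.Icc ε (1/ε) \ Set.Icc m M, (η ε x * Real.exp (-(Q x))) ^ 2) ≤ δ) := by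
  have hIcc_pos {ε} (hε : ε ∈ Ioo (0:ℝ) (1/2)) : Icc ε (1/ε) ⊆ Ioi 0 :=
    fun x hx ↦ hε.1.trans_le hx.1
  have hle {ε} (hε : ε ∈ Ioo (0:ℝ) (1/2)) : ε ≤ 1/ε := by
    rw [le_div_iff₀ hε.1]; nlinarith [hε.1, hε.2]
  have hQ' : ∀ x ∈ Ioi (0:ℝ), HasDerivAt Q (q x) x := fun x hx ↦ funext hQ ▸
    hasDerivAt_integral_of_continuousOn (HasDerivAt.continuousOn hq) isOpen_Ioi
      (ordConnected_Ioi.uIcc_subset one_pos hx)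
  have heig {ε} (hε : ε ∈ Ioo (0:ℝ) (1/2)) := isDirichletEigenfunction_mul_exp_neg
    (fun x hx ↦ hq x (hIcc_pos hε hx)) (hq'cont.mono (hIcc_pos hε))
    (fun x hx ↦ hQ' x (hIcc_pos hε hx)) (fun x hx ↦ hWdef x (hIcc_pos hε hx))
    (hη' ε hε) (hη'' ε hε) (hode ε hε) (hbd ε hε).1 (hbd ε hε).2
  have hnorm' {ε} (hε : ε ∈ Ioo (0:ℝ) (1/2)) : ∫ x in ε..(1/ε), (η ε x * exp (-Q x)) ^ 2 = 1 := by
    simpa only [mul_exp_neg_sq] using hnorm ε hε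
  have hWC {ε} (hε : ε ∈ Ioo (0:ℝ) (1/2)) : ∀ x ∈ Icc ε (1/ε), -C ≤ W x :=
    fun x hx ↦ hWlb x (hIcc_pos hε hx)
  set B := 1 + |2 * Λ + C|
  have hB0 : 0 < B := by positivity
  have hB {ε} (hε : ε ∈ Ioo (0:ℝ) (1/2)) : 1 + 2 * lam ε + C ≤ B := by
    have := le_abs_self (2 * Λ + C); linarith [hlam ε hε]
  refine ⟨⟨B, hB0, fun ε hε x hx ↦
    ((heig hε).sq_le (hnorm' hε) (hWC hε) hx).trans (hB hε)⟩, fun δ hδ ↦ ?_⟩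
  obtain ⟨M₀, hM₀⟩ := eventually_atTop.1 (hWtop.eventually_ge_atTop (2 * B / δ))
  refine ⟨δ / (2 * B), max M₀ (δ / (2 * B) + 1), by positivity,
    (lt_add_one _).trans_le (le_max_right _ _), fun ε hε ↦ ?_⟩
  calc _ ≤ (1 + 2 * lam ε + C) * (δ / (2 * B)) + (2 * lam ε + C) / (2 * B / δ) :=
        (heig hε).setIntegral_Icc_diff_Icc_sq_le (hle hε) (hnorm' hε) (hWC hε) hC.le hε.1.le
          (by positivity) ((lt_add_one _).le.trans (le_max_right _ _)) (by positivity)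
          fun x _ hx ↦ hM₀ x ((le_max_left _ _).trans hx.le)
    _ ≤ B * (δ / (2 * B)) + B / (2 * B / δ) := by gcongr <;> linarith [hB hε]
    _ = δ := by field_simp; ring

theorem stmt_4 (q q' Q W : ℝ → ℝ)
    (hq : ∀ x ∈ Set.Ioi (0:ℝ), HasDerivAt q (q' x) x)
    (hq'cont : ContinuousOn q' (Set.Ioi 0))
    (hQ : ∀ x, Q x = ∫ y in (1:ℝ)..x, q y)
    (hWdef : ∀ x ∈ Set.Ioi (0:ℝ), W x = q x ^ 2 - q' x)
    -- Hypothesis (H1)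
    (C : ℝ) (hC : 0 < C) (hWlb : ∀ x ∈ Set.Ioi (0:ℝ), -C ≤ W x)
    (hWtop : Tendsto W atTop atTop)
    -- Family setup
    (Λ : ℝ) (lam : ℝ → ℝ) (η η' η'' : ℝ → ℝ → ℝ)
    (hlam : ∀ ε ∈ Set.Ioo (0:ℝ) (1/2), lam ε ≤ Λ)
    (hη' : ∀ ε ∈ Set.Ioo (0:ℝ) (1/2), ∀ x ∈ Set.Icc ε (1/ε),
      HasDerivAt (η ε) (η' ε x) x)
    (hη'' : ∀ ε ∈ Set.Ioo (0:ℝ) (1/2), ∀ x ∈ Set.Icc ε (1/ε),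
      HasDerivAt (η' ε) (η'' ε x) x)
    (hη''cont : ∀ ε ∈ Set.Ioo (0:ℝ) (1/2), ContinuousOn (η'' ε) (Set.Icc ε (1/ε)))
    (hpos : ∀ ε ∈ Set.Ioo (0:ℝ) (1/2), ∀ x ∈ Set.Ioo ε (1/ε), 0 < η ε x)
    (hbd : ∀ ε ∈ Set.Ioo (0:ℝ) (1/2), η ε ε = 0 ∧ η ε (1/ε) = 0)
    (hode : ∀ ε ∈ Set.Ioo (0:ℝ) (1/2), ∀ x ∈ Set.Icc ε (1/ε),
      (1/2) * η'' ε x - q x * η' ε x = -(lam ε) * η ε x)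
    (hnorm : ∀ ε ∈ Set.Ioo (0:ℝ) (1/2),
      (∫ x in ε..(1/ε), (η ε x) ^ 2 * Real.exp (-2 * Q x)) = 1) :
    -- (i) uniform boundedness of v_ε² with v_ε(x) = η_ε(x)·e^{−Q(x)}
    (∃ A > 0, ∀ ε ∈ Set.Ioo (0:ℝ) (1/2), ∀ x ∈ Set.Icc ε (1/ε),
      (η ε x * Real.exp (-(Q x))) ^ 2 ≤ A) ∧
    -- (ii) tightness of the family (v_ε(x)² dx)
    (∀ δ > 0, ∃ m M : ℝ, 0 < m ∧ m < M ∧ ∀ ε ∈ Set.Ioo (0:ℝ) (1/2),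
      (∫ x in Set.Icc ε (1/ε) \ Set.Icc m M, (η ε x * Real.exp (-(Q x))) ^ 2) ≤ δ) :=
  stmt_4_general q q' Q W hq hq'cont hQ hWdef C hC hWlb hWtop Λ lam η η' η'' hlam hη' hη'' hbd hode
    hnorm
end

section
/- Assume hypotheses (H1) and (H2) and the family setup below. Then the family of measures (η_ε(x)·e^{−2Q(x)}·1_{(ε,1/ε)}(x) dx)_{ε ∈ (0,1/2)} is tight on (0,∞): for every δ > 0 there exist 0 < m < M < ∞ such that for all ε ∈ (0,1/2), ∫_{(ε,1/ε) ∖ [m,M]} η_ε(x)·e^{−2Q(x)} dx ≤ δ. -/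
/-!
The eigenvalue equation makes `(η η' - η² q) e^{-2Q}` a primitive of
`(η' - η q)² e^{-2Q} + η² (W - 2λ) e^{-2Q}`; as `η` vanishes at both ends, this gives the energy
bound `∫ η² (W + C + 1) e^{-2Q} ≤ 2Λ + C + 1`, uniformly in `ε`. Near `0`, the weighted AM-GM
inequality `η ≤ (t w η² + 1 / (t w)) / 2` with `w = W + C + 1` bounds `∫ η e^{-2Q}` by this energy
and by `∫₀^m e^{-2Q} / w`, which is small by (H2); near `∞` the same with `w = 1` uses the
normalisation and the smallness of `∫_M^∞ e^{-2Q}`.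
-/

open MeasureTheory intervalIntegral Filter Set Topology

lemma hasDerivAt_integral_of_continuousOn_Ioi {f : ℝ → ℝ} {c a x : ℝ}
    (hf : ContinuousOn f (Ioi c)) (ha : c < a) (hx : c < x) :
    HasDerivAt (fun x => ∫ y in a..x, f y) (f x) x := by
  have hsub : uIcc a x ⊆ Ioi c := fun y hy => lt_of_lt_of_le (lt_min ha hx) hy.1
  exact integral_hasDerivAt_right ((hf.mono hsub).intervalIntegrable)
    ((hf.stronglyMeasurableAtFilter isOpen_Ioi) x hx) (hf.continuousAt (Ioi_mem_nhds hx))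

lemma tendsto_setIntegral_Ioi_atTop_zero {f : ℝ → ℝ} {a : ℝ} (hf : IntegrableOn f (Ioi a)) :
    Tendsto (fun M => ∫ x in Ioi M, f x) atTop (𝓝 0) := by
  have hempty : ⋂ M : ℝ, Ioi M = ∅ :=
    eq_empty_of_forall_notMem fun x hx => lt_irrefl x (mem_iInter.mp hx x)
  simpa [hempty] using tendsto_setIntegral_of_antitone (fun _ => measurableSet_Ioi)
    (fun _ _ h => Ioi_subset_Ioi h) ⟨a, hf⟩

lemma tendsto_setIntegral_Ioo_nhdsGT_zero {f : ℝ → ℝ} {a b : ℝ} (hab : a < b)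
    (hf : IntegrableOn f (Ioo a b)) :
    Tendsto (fun m => ∫ x in Ioo a m, f x) (𝓝[>] a) (𝓝 0) := by
  have hlen : Tendsto (fun m => ENNReal.ofReal (m - a)) (𝓝[>] a) (𝓝 0) := by
    have := ENNReal.tendsto_ofReal ((continuous_id.sub (continuous_const (y := a))).tendsto a)
    simpa using this.mono_left nhdsWithin_le_nhds
  have hvol : Tendsto (fun m => volume.restrict (Ioo a b) (Ioo a m)) (𝓝[>] a) (𝓝 0) := by
    refine tendsto_of_tendsto_of_tendsto_of_le_of_le tendsto_const_nhds hlen (fun _ => zero_le)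
      fun m => ?_
    simpa using Measure.restrict_apply_le (μ := volume) (Ioo a b) (Ioo a m)
  refine (hf.tendsto_setIntegral_nhds_zero hvol).congr' ?_
  filter_upwards [Ioo_mem_nhdsGT hab] with m hm
  rw [Measure.restrict_restrict measurableSet_Ioo, inter_eq_left.mpr (Ioo_subset_Ioo_right hm.2.le)]

lemma exists_setIntegral_subset_Ioi_le {f : ℝ → ℝ} {a c : ℝ} (hf : IntegrableOn f (Ioi a))
    (hf0 : ∀ x ∈ Ioi a, 0 ≤ f x) (hc : 0 < c) :
    ∃ M, a < M ∧ ∀ s ⊆ Ioi M, ∫ x in s, f x ≤ c := by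
  obtain ⟨M, haM, hM⟩ := ((eventually_gt_atTop a).and
    ((tendsto_setIntegral_Ioi_atTop_zero hf).eventually (ge_mem_nhds hc))).exists
  refine ⟨M, haM, fun s hs => le_trans (setIntegral_mono_set (hf.mono_set (Ioi_subset_Ioi haM.le))
    ?_ hs.eventuallyLE) hM⟩
  exact (ae_restrict_iff' measurableSet_Ioi).mpr (ae_of_all _ fun x hx => hf0 x (haM.trans hx))

lemma exists_setIntegral_subset_Ioo_le {f : ℝ → ℝ} {a b c : ℝ} (hab : a < b)
    (hf : IntegrableOn f (Ioo a b)) (hf0 : ∀ x ∈ Ioo a b, 0 ≤ f x) (hc : 0 < c) :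
    ∃ m ∈ Ioo a b, ∀ s ⊆ Ioo a m, ∫ x in s, f x ≤ c := by
  obtain ⟨m, hm, hmab⟩ := (((tendsto_setIntegral_Ioo_nhdsGT_zero hab hf).eventually
    (ge_mem_nhds hc)).and (Ioo_mem_nhdsGT hab)).exists
  have hsub : Ioo a m ⊆ Ioo a b := Ioo_subset_Ioo_right hmab.2.le
  refine ⟨m, hmab, fun s hs => le_trans (setIntegral_mono_set (hf.mono_set hsub) ?_
    hs.eventuallyLE) hm⟩
  exact (ae_restrict_iff' measurableSet_Ioo).mpr (ae_of_all _ fun x hx => hf0 x (hsub hx))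

lemma setIntegral_mul_le_of_weighted_sq_le {α : Type*} [MeasurableSpace α] {μ : Measure α}
    {s : Set α} {u e w : α → ℝ} {A δ : ℝ} (hs : MeasurableSet s) (hA : 0 < A) (hδ : 0 < δ)
    (he : ∀ x ∈ s, 0 ≤ e x) (hw : ∀ x ∈ s, 0 < w x)
    (hue : IntegrableOn (fun x => u x * e x) s μ)
    (huwe : IntegrableOn (fun x => u x ^ 2 * w x * e x) s μ)
    (hew : IntegrableOn (fun x => e x / w x) s μ)
    (h_sq : ∫ x in s, u x ^ 2 * w x * e x ∂μ ≤ A) (h_inv : ∫ x in s, e x / w x ∂μ ≤ δ ^ 2 / A) :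
    ∫ x in s, u x * e x ∂μ ≤ δ := by
  set t := δ / A with ht
  have ht0 : 0 < t := by positivity
  have hpt : ∀ x ∈ s, u x * e x ≤ t / 2 * (u x ^ 2 * w x * e x) + 1 / (2 * t) * (e x / w x) := by
    intro x hx
    have hw0 := hw x hx
    have hamgm : u x ≤ t / 2 * (u x ^ 2 * w x) + 1 / (2 * t * w x) := by
      rw [← sub_nonneg]
      have : t / 2 * (u x ^ 2 * w x) + 1 / (2 * t * w x) - u x
          = (t * w x * u x - 1) ^ 2 / (2 * t * w x) := by field_simp; ring
      rw [this]; positivity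
    calc u x * e x ≤ (t / 2 * (u x ^ 2 * w x) + 1 / (2 * t * w x)) * e x :=
          mul_le_mul_of_nonneg_right hamgm (he x hx)
      _ = _ := by field_simp
  calc ∫ x in s, u x * e x ∂μ
      ≤ ∫ x in s, (t / 2 * (u x ^ 2 * w x * e x) + 1 / (2 * t) * (e x / w x)) ∂μ :=
        setIntegral_mono_on hue (by exact (huwe.const_mul _).add (hew.const_mul _)) hs hpt
    _ = t / 2 * ∫ x in s, u x ^ 2 * w x * e x ∂μ + 1 / (2 * t) * ∫ x in s, e x / w x ∂μ := by
        rw [integral_add (huwe.const_mul _) (hew.const_mul _), MeasureTheory.integral_const_mul,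
          MeasureTheory.integral_const_mul]
    _ ≤ t / 2 * A + 1 / (2 * t) * (δ ^ 2 / A) := by gcongr
    _ = δ := by rw [ht]; field_simp; ring

section Eigenfunction

variable {a b lam c x : ℝ} {η η' η'' q q' Q : ℝ → ℝ}

lemma hasDerivAt_eigenfunction_flux (hη : HasDerivAt η (η' x) x) (hη' : HasDerivAt η' (η'' x) x)
    (hq : HasDerivAt q (q' x) x) (hQ : HasDerivAt Q (q x) x)
    (hode : (1/2) * η'' x - q x * η' x = -lam * η x) :
    HasDerivAt (fun y => (η y * η' y - η y ^ 2 * q y) * Real.exp (-2 * Q y))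
      ((η' x - η x * q x) ^ 2 * Real.exp (-2 * Q x)
        + η x ^ 2 * (q x ^ 2 - q' x - 2 * lam) * Real.exp (-2 * Q x)) x := by
  refine (((hη.mul hη').sub ((hη.pow 2).mul hq)).mul (hQ.const_mul (-2)).exp).congr_deriv ?_
  simp only [Pi.mul_apply, Pi.sub_apply, Pi.pow_apply]
  linear_combination (2 * η x * Real.exp (-2 * Q x)) * hode

lemma integral_sq_mul_potential_add_le (hab : a ≤ b)
    (hη : ∀ x ∈ Icc a b, HasDerivAt η (η' x) x) (hη' : ∀ x ∈ Icc a b, HasDerivAt η' (η'' x) x)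
    (hq : ∀ x ∈ Icc a b, HasDerivAt q (q' x) x) (hq' : ContinuousOn q' (Icc a b))
    (hQ : ∀ x ∈ Icc a b, HasDerivAt Q (q x) x)
    (hode : ∀ x ∈ Icc a b, (1/2) * η'' x - q x * η' x = -lam * η x)
    (ha : η a = 0) (hb : η b = 0) :
    ∫ x in a..b, η x ^ 2 * (q x ^ 2 - q' x + c) * Real.exp (-2 * Q x)
      ≤ (2 * lam + c) * ∫ x in a..b, η x ^ 2 * Real.exp (-2 * Q x) := by
  have hcont {f f' : ℝ → ℝ} (h : ∀ x ∈ Icc a b, HasDerivAt f (f' x) x) : ContinuousOn f (Icc a b) :=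
    fun x hx => (h x hx).continuousAt.continuousWithinAt
  have hηc := hcont hη
  have hη'c := hcont hη'
  have hqc := hcont hq
  have hQc := hcont hQ
  have hint {f : ℝ → ℝ} (hf : ContinuousOn f (Icc a b)) : IntervalIntegrable f volume a b :=
    hf.intervalIntegrable_of_Icc hab
  have hint₁ := hint (f := fun x => (η' x - η x * q x) ^ 2 * Real.exp (-2 * Q x)) (by fun_prop)
  have hint₂ := hint (f := fun x => η x ^ 2 * (q x ^ 2 - q' x - 2 * lam) * Real.exp (-2 * Q x))
    (by fun_prop)
  have hint₃ := hint (f := fun x => η x ^ 2 * Real.exp (-2 * Q x)) (by fun_prop)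
  have hflux : (∫ x in a..b, (η' x - η x * q x) ^ 2 * Real.exp (-2 * Q x))
      + ∫ x in a..b, η x ^ 2 * (q x ^ 2 - q' x - 2 * lam) * Real.exp (-2 * Q x) = 0 := by
    rw [← integral_add hint₁ hint₂, integral_eq_sub_of_hasDerivAt (fun x hx =>
      have hx : x ∈ Icc a b := uIcc_of_le hab ▸ hx
      hasDerivAt_eigenfunction_flux (hη x hx) (hη' x hx) (hq x hx) (hQ x hx) (hode x hx))
      (hint₁.add hint₂), ha, hb]
    ring
  have hsq : 0 ≤ ∫ x in a..b, (η' x - η x * q x) ^ 2 * Real.exp (-2 * Q x) :=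
    integral_nonneg hab fun x _ => by positivity
  have hsplit : ∫ x in a..b, η x ^ 2 * (q x ^ 2 - q' x + c) * Real.exp (-2 * Q x)
      = (∫ x in a..b, η x ^ 2 * (q x ^ 2 - q' x - 2 * lam) * Real.exp (-2 * Q x))
        + (2 * lam + c) * ∫ x in a..b, η x ^ 2 * Real.exp (-2 * Q x) := by
    rw [← intervalIntegral.integral_const_mul,
      ← integral_add hint₂ (hint₃.const_mul (2 * lam + c))]
    exact integral_congr fun x _ => by ring
  linarith

lemma setIntegral_Ioo_sq_mul_add_le {W : ℝ → ℝ} (hab : a ≤ b)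
    (hη : ∀ x ∈ Icc a b, HasDerivAt η (η' x) x) (hη' : ∀ x ∈ Icc a b, HasDerivAt η' (η'' x) x)
    (hq : ∀ x ∈ Icc a b, HasDerivAt q (q' x) x) (hq' : ContinuousOn q' (Icc a b))
    (hQ : ∀ x ∈ Icc a b, HasDerivAt Q (q x) x)
    (hode : ∀ x ∈ Icc a b, (1/2) * η'' x - q x * η' x = -lam * η x)
    (ha : η a = 0) (hb : η b = 0) (hW : ∀ x ∈ Icc a b, W x = q x ^ 2 - q' x)
    (hnorm : ∫ x in a..b, η x ^ 2 * Real.exp (-2 * Q x) = 1) :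
    ∫ x in Ioo a b, η x ^ 2 * (W x + c) * Real.exp (-2 * Q x) ≤ 2 * lam + c := by
  rw [← integral_Ioc_eq_integral_Ioo, ← integral_of_le hab]
  calc _ = ∫ x in a..b, η x ^ 2 * (q x ^ 2 - q' x + c) * Real.exp (-2 * Q x) :=
        integral_congr fun x hx => by rw [hW x (uIcc_of_le hab ▸ hx)]
    _ ≤ (2 * lam + c) * ∫ x in a..b, η x ^ 2 * Real.exp (-2 * Q x) :=
        integral_sq_mul_potential_add_le hab hη hη' hq hq' hQ hode ha hb
    _ = 2 * lam + c := by rw [hnorm, mul_one]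

end Eigenfunction

lemma Ioo_diff_Icc_eq_union {α : Type*} [LinearOrder α] {a b m M : α} :
    Ioo a b \ Icc m M = Ioo a (min b m) ∪ Ioo (max a M) b := by
  ext x
  simp only [Set.mem_sdiff, mem_Ioo, mem_Icc, mem_union, lt_min_iff, max_lt_iff]
  grind

lemma setIntegral_Ioo_diff_Icc_le {u e w : ℝ → ℝ} {a b m M B δ : ℝ} (hB : 0 < B) (hδ : 0 < δ)
    (hmM : m ≤ M) (hu : ContinuousOn u (Icc a b)) (he : ContinuousOn e (Icc a b))
    (hw : ContinuousOn w (Icc a b)) (he0 : ∀ x ∈ Icc a b, 0 ≤ e x)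
    (hw1 : ∀ x ∈ Icc a b, 1 ≤ w x) (h_sq : ∫ x in Ioo a b, u x ^ 2 * w x * e x ≤ B)
    (h_head : ∫ x in Ioo a (min b m), e x / w x ≤ δ ^ 2 / B)
    (h_tail : ∫ x in Ioo (max a M) b, e x ≤ δ ^ 2 / B) :
    ∫ x in Ioo a b \ Icc m M, u x * e x ≤ 2 * δ := by
  have hint {f : ℝ → ℝ} (hf : ContinuousOn f (Icc a b)) {s : Set ℝ} (hs : s ⊆ Ioo a b) :
      IntegrableOn f s := (hf.integrableOn_Icc).mono_set (hs.trans Ioo_subset_Icc_self)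
  have h_sq_subset {s : Set ℝ} (hs : s ⊆ Ioo a b) :
      ∫ x in s, u x ^ 2 * w x * e x ≤ B := by
    refine le_trans (setIntegral_mono_set (hint (by fun_prop) le_rfl) ?_ hs.eventuallyLE) h_sq
    refine (ae_restrict_iff' measurableSet_Ioo).mpr (ae_of_all _ fun x hx => ?_)
    have := hw1 x (Ioo_subset_Icc_self hx)
    have := he0 x (Ioo_subset_Icc_self hx)
    positivity
  have hhead : Ioo a (min b m) ⊆ Ioo a b := Ioo_subset_Ioo_right (min_le_left _ _)
  have htail : Ioo (max a M) b ⊆ Ioo a b := Ioo_subset_Ioo_left (le_max_left _ _)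
  have hdisj : Disjoint (Ioo a (min b m)) (Ioo (max a M) b) := by
    rw [Ioo_disjoint_Ioo]
    exact le_max_of_le_right (le_max_of_le_right (min_le_of_left_le (min_le_of_right_le hmM)))
  rw [Ioo_diff_Icc_eq_union, setIntegral_union hdisj measurableSet_Ioo (hint (by fun_prop) hhead)
    (hint (by fun_prop) htail), two_mul]
  refine add_le_add ?_ ?_
  · refine setIntegral_mul_le_of_weighted_sq_le measurableSet_Ioo hB hδ
      (fun x hx => he0 x (Ioo_subset_Icc_self (hhead hx)))
      (fun x hx => one_pos.trans_le (hw1 x (Ioo_subset_Icc_self (hhead hx))))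
      (hint (by fun_prop) hhead) (hint (by fun_prop) hhead) ?_ (h_sq_subset hhead) h_head
    refine hint (ContinuousOn.div he hw fun x hx => ?_) hhead
    exact (one_pos.trans_le (hw1 x hx)).ne'
  · refine setIntegral_mul_le_of_weighted_sq_le (w := fun _ => 1) measurableSet_Ioo hB hδ
      (fun x hx => he0 x (Ioo_subset_Icc_self (htail hx))) (fun _ _ => one_pos)
      (hint (by fun_prop) htail) (hint (by fun_prop) htail) (hint (by fun_prop) htail) ?_ ?_
    · refine le_trans (setIntegral_mono_on (hint (by fun_prop) htail) (hint (by fun_prop) htail)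
        measurableSet_Ioo fun x hx => ?_) (h_sq_subset htail)
      have hx' := Ioo_subset_Icc_self (htail hx)
      have := hw1 x hx'
      have := he0 x hx'
      gcongr
    · simpa using h_tail

theorem stmt_7_general (q q' Q W : ℝ → ℝ)
    (hq : ∀ x ∈ Set.Ioi (0:ℝ), HasDerivAt q (q' x) x)
    (hq'cont : ContinuousOn q' (Set.Ioi 0))
    (hQ : ∀ x, Q x = ∫ y in (1:ℝ)..x, q y)
    (hWdef : ∀ x ∈ Set.Ioi (0:ℝ), W x = q x ^ 2 - q' x)
    -- Hypothesis (H1)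
    (C : ℝ) (hWlb : ∀ x ∈ Set.Ioi (0:ℝ), -C ≤ W x)
    -- Hypothesis (H2)
    (hH2a : IntegrableOn (fun x => Real.exp (-2 * Q x)) (Set.Ioi 1))
    (hH2b : IntegrableOn (fun x => Real.exp (-2 * Q x) / (W x + C + 1)) (Set.Ioo 0 1))
    -- Family setup
    (Λ : ℝ) (lam : ℝ → ℝ) (η η' η'' : ℝ → ℝ → ℝ)
    (hlam : ∀ ε ∈ Set.Ioo (0:ℝ) (1/2), lam ε ≤ Λ)
    (hη' : ∀ ε ∈ Set.Ioo (0:ℝ) (1/2), ∀ x ∈ Set.Icc ε (1/ε),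
      HasDerivAt (η ε) (η' ε x) x)
    (hη'' : ∀ ε ∈ Set.Ioo (0:ℝ) (1/2), ∀ x ∈ Set.Icc ε (1/ε),
      HasDerivAt (η' ε) (η'' ε x) x)
    (hbd : ∀ ε ∈ Set.Ioo (0:ℝ) (1/2), η ε ε = 0 ∧ η ε (1/ε) = 0)
    (hode : ∀ ε ∈ Set.Ioo (0:ℝ) (1/2), ∀ x ∈ Set.Icc ε (1/ε),
      (1/2) * η'' ε x - q x * η' ε x = -(lam ε) * η ε x)
    (hnorm : ∀ ε ∈ Set.Ioo (0:ℝ) (1/2),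
      (∫ x in ε..(1/ε), (η ε x) ^ 2 * Real.exp (-2 * Q x)) = 1) :
    ∀ δ > 0, ∃ m M : ℝ, 0 < m ∧ m < M ∧ ∀ ε ∈ Set.Ioo (0:ℝ) (1/2),
      (∫ x in Set.Ioo ε (1/ε) \ Set.Icc m M, η ε x * Real.exp (-2 * Q x)) ≤ δ := by
  have hqc : ContinuousOn q (Ioi 0) := fun x hx => (hq x hx).continuousAt.continuousWithinAt
  have hQd : ∀ x ∈ Ioi (0:ℝ), HasDerivAt Q (q x) x := fun x hx =>
    (hasDerivAt_integral_of_continuousOn_Ioi hqc one_pos hx).congr_of_eventuallyEq (.of_forall hQ)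
  have hEc : ContinuousOn (fun x => Real.exp (-2 * Q x)) (Ioi 0) :=
    fun x hx => ((hQd x hx).const_mul (-2)).exp.continuousAt.continuousWithinAt
  have hWc : ContinuousOn W (Ioi 0) := ((hqc.pow 2).sub hq'cont).congr hWdef
  intro δ hδ
  set B := max (2 * Λ + C + 1) 1
  have hB : 0 < B := one_pos.trans_le (le_max_right _ _)
  obtain ⟨m, ⟨hm0, hm1⟩, hm⟩ := exists_setIntegral_subset_Ioo_le one_pos hH2b
    (fun x hx => div_nonneg (Real.exp_pos _).le (by linarith [hWlb x hx.1]))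
    (show 0 < (δ / 2) ^ 2 / B by positivity)
  obtain ⟨M, hM1, hM⟩ := exists_setIntegral_subset_Ioi_le hH2a (fun _ _ => (Real.exp_pos _).le)
    (show 0 < (δ / 2) ^ 2 / B by positivity)
  refine ⟨m, M, hm0, hm1.trans hM1, fun ε hε => ?_⟩
  have hεε : ε ≤ 1 / ε := by rw [le_div_iff₀ hε.1]; nlinarith [hε.1, hε.2]
  have hsub : Icc ε (1 / ε) ⊆ Ioi 0 := fun x hx => hε.1.trans_le hx.1
  have henergy : ∫ x in Ioo ε (1 / ε), η ε x ^ 2 * (W x + C + 1) * Real.exp (-2 * Q x) ≤ B := by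
    simp_rw [add_assoc (W _)]
    refine (setIntegral_Ioo_sq_mul_add_le hεε (hη' ε hε) (hη'' ε hε) (fun x hx => hq x (hsub hx))
      (hq'cont.mono hsub) (fun x hx => hQd x (hsub hx)) (hode ε hε) (hbd ε hε).1 (hbd ε hε).2
      (fun x hx => hWdef x (hsub hx)) (hnorm ε hε)).trans ?_
    linarith [hlam ε hε, le_max_left (2 * Λ + C + 1) 1]
  have := setIntegral_Ioo_diff_Icc_le (u := η ε) (w := fun x => W x + C + 1) hB (half_pos hδ)
    (hm1.trans hM1).le (fun x hx => (hη' ε hε x hx).continuousAt.continuousWithinAt)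
    (hEc.mono hsub) ((hWc.mono hsub).add continuousOn_const |>.add continuousOn_const)
    (fun _ _ => (Real.exp_pos _).le) (fun x hx => by linarith [hWlb x (hsub hx)]) henergy
    (hm _ (Ioo_subset_Ioo hε.1.le (min_le_right _ _)))
    (hM _ fun x hx => (le_max_right _ _).trans_lt hx.1)
  linarith

theorem stmt_7 (q q' Q W : ℝ → ℝ)
    (hq : ∀ x ∈ Set.Ioi (0:ℝ), HasDerivAt q (q' x) x)
    (hq'cont : ContinuousOn q' (Set.Ioi 0))
    (hQ : ∀ x, Q x = ∫ y in (1:ℝ)..x, q y)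
    (hWdef : ∀ x ∈ Set.Ioi (0:ℝ), W x = q x ^ 2 - q' x)
    -- Hypothesis (H1)
    (C : ℝ) (hC : 0 < C) (hWlb : ∀ x ∈ Set.Ioi (0:ℝ), -C ≤ W x)
    (hWtop : Tendsto W atTop atTop)
    -- Hypothesis (H2)
    (hH2a : IntegrableOn (fun x => Real.exp (-2 * Q x)) (Set.Ioi 1))
    (hH2b : IntegrableOn (fun x => Real.exp (-2 * Q x) / (W x + C + 1)) (Set.Ioo 0 1))
    -- Family setup
    (Λ : ℝ) (lam : ℝ → ℝ) (η η' η'' : ℝ → ℝ → ℝ)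
    (hlam : ∀ ε ∈ Set.Ioo (0:ℝ) (1/2), lam ε ≤ Λ)
    (hη' : ∀ ε ∈ Set.Ioo (0:ℝ) (1/2), ∀ x ∈ Set.Icc ε (1/ε),
      HasDerivAt (η ε) (η' ε x) x)
    (hη'' : ∀ ε ∈ Set.Ioo (0:ℝ) (1/2), ∀ x ∈ Set.Icc ε (1/ε),
      HasDerivAt (η' ε) (η'' ε x) x)
    (hη''cont : ∀ ε ∈ Set.Ioo (0:ℝ) (1/2), ContinuousOn (η'' ε) (Set.Icc ε (1/ε)))
    (hpos : ∀ ε ∈ Set.Ioo (0:ℝ) (1/2), ∀ x ∈ Set.Ioo ε (1/ε), 0 < η ε x)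
    (hbd : ∀ ε ∈ Set.Ioo (0:ℝ) (1/2), η ε ε = 0 ∧ η ε (1/ε) = 0)
    (hode : ∀ ε ∈ Set.Ioo (0:ℝ) (1/2), ∀ x ∈ Set.Icc ε (1/ε),
      (1/2) * η'' ε x - q x * η' ε x = -(lam ε) * η ε x)
    (hnorm : ∀ ε ∈ Set.Ioo (0:ℝ) (1/2),
      (∫ x in ε..(1/ε), (η ε x) ^ 2 * Real.exp (-2 * Q x)) = 1) :
    ∀ δ > 0, ∃ m M : ℝ, 0 < m ∧ m < M ∧ ∀ ε ∈ Set.Ioo (0:ℝ) (1/2),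
      (∫ x in Set.Ioo ε (1/ε) \ Set.Icc m M, η ε x * Real.exp (-2 * Q x)) ≤ δ :=
  stmt_7_general q q' Q W hq hq'cont hQ hWdef C hWlb hH2a hH2b Λ lam η η' η'' hlam hη' hη'' hbd hode
    hnorm
end
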